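/- Let Z ∈ ℝ^{d×r} and α ≥ 2·max_i ‖Z_i‖₂. Then for every X ∈ ℝ^{d×r} and every U ∈ ℝ^{d×r} with UUᵀ = ZZᵀ, the gradient of the regularizer satisfies ⟨∇R(X), X − U⟩ ≥ 0 (trace inner product). -/
import Mathlib


open Matrix Finset

noncomputable section

/-- Euclidean norm of the `i`-th row of a matrix. -/
def rowNorm {d r : ℕ} (X : Matrix (Fin d) (Fin r) ℝ) (i : Fin d) : ℝ :=
  Real.sqrt (∑ j, (X i j) ^ 2)

/-- The diagonal coefficients `Γᵢᵢ = 4(‖Xᵢ‖ − α)³/‖Xᵢ‖ · 1_{‖Xᵢ‖ ≥ α}`. -/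
def gammaCoef {d r : ℕ} (α : ℝ) (X : Matrix (Fin d) (Fin r) ℝ) (i : Fin d) : ℝ :=
  if α ≤ rowNorm X i then 4 * (rowNorm X i - α) ^ 3 / rowNorm X i else 0

/-- Gradient `∇R(X) = Γ X` of the regularizer `R(X) = ∑ᵢ (‖Xᵢ‖ − α)⁴ 1_{‖Xᵢ‖ ≥ α}`. -/
def gradRr {d r : ℕ} (α : ℝ) (X : Matrix (Fin d) (Fin r) ℝ) : Matrix (Fin d) (Fin r) ℝ :=
  fun i j => gammaCoef α X i * X i j

/-- Trace inner product `⟨A, B⟩ = tr(AᵀB)`. -/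
def mdot {m n : ℕ} (A B : Matrix (Fin m) (Fin n) ℝ) : ℝ := ∑ i, ∑ j, A i j * B i j

/-- if `α ≥ 2 maxᵢ ‖Zᵢ‖`, then for every `X` and every `U` with
`UUᵀ = ZZᵀ`, the gradient of the regularizer satisfies `⟨∇R(X), X − U⟩ ≥ 0`. -/
theorem stmt17 (d r : ℕ) (hd : 0 < d) (hr : 0 < r) (α : ℝ) (hα : 0 < α)
    (Z : Matrix (Fin d) (Fin r) ℝ) (hαZ : ∀ i, 2 * rowNorm Z i ≤ α) :
    ∀ (X U : Matrix (Fin d) (Fin r) ℝ), U * Uᵀ = Z * Zᵀ →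
      0 ≤ mdot (gradRr α X) (X - U) := by
  intro X U hU
  have hrowU : ∀ i, rowNorm U i = rowNorm Z i := by
    intro i
    have h := congrFun (congrFun hU i) i
    simp only [Matrix.mul_apply, Matrix.transpose_apply] at h
    unfold rowNorm
    congr 1
    simpa [pow_two] using h
  unfold mdot gradRr
  apply Finset.sum_nonneg
  intro i _
  by_cases h : α ≤ rowNorm X i
  · set nX := rowNorm X i with hnX
    set nU := rowNorm U i with hnU
    have hnXnn : 0 ≤ nX := Real.sqrt_nonneg _
    have hnUnn : 0 ≤ nU := Real.sqrt_nonneg _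
    have hγ : 0 ≤ gammaCoef α X i := by
      unfold gammaCoef
      rw [if_pos h]
      apply div_nonneg _ hnXnn
      have hx : 0 ≤ nX - α := by linarith
      positivity
    have hsq : ∑ j, X i j ^ 2 = nX ^ 2 := by
      rw [hnX]; unfold rowNorm
      rw [Real.sq_sqrt (Finset.sum_nonneg fun j _ => sq_nonneg _)]
    have hcs : ∑ j, X i j * U i j ≤ nX * nU :=
      Real.sum_mul_le_sqrt_mul_sqrt Finset.univ (fun j => X i j) (fun j => U i j)
    have hUα : 2 * nU ≤ α := by rw [hnU, hrowU]; exact hαZ i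
    have hterm : 0 ≤ ∑ j, X i j * (X i j - U i j) := by
      have : ∑ j, X i j * (X i j - U i j)
          = (∑ j, X i j ^ 2) - ∑ j, X i j * U i j := by
        rw [← Finset.sum_sub_distrib]
        congr 1 with j
        ring
      rw [this, hsq]
      nlinarith [hcs, hUα, h, hα]
    calc (0:ℝ) = gammaCoef α X i * ∑ j, X i j * (X i j - U i j) - gammaCoef α X i * ∑ j, X i j * (X i j - U i j) := by ring
    _ ≤ _ := by
      rw [sub_le_iff_le_add]
      have : ∑ j, gammaCoef α X i * X i j * (X - U) i j
          = gammaCoef α X i * ∑ j, X i j * (X i j - U i j) := by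
        rw [Finset.mul_sum]
        congr 1 with j
        simp [Matrix.sub_apply]
        ring
      rw [this]
      nlinarith [mul_nonneg hγ hterm]
  · simp [gammaCoef, h]
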